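/- arXiv:1909.11319 — 2 statements merged into one kernel-verified Lean document; each statement's English description precedes it below -/
import Mathlib

section
/- Let a be an even integer with a ≥ 2, and let b, c ≥ 1 be integers of opposite parity (b + c odd). Then the continued fraction value [a, −2, …, −2, −4, −2, …, −2] (with b copies of −2 before the entry −4 and c copies of −2 after it) equals [2m+1, 2n, −2, 2l−1] for some integers m ≥ 1, n ≥ 1, l ≥ 2, or equals [2m+1, 2n−1, −2, 2l] for some integers m ≥ 1, n ≥ 2, l ≥ 1. -/
/-!
The whole chain of `-2`'s around the `-4` collapses: for every `x` and all `b c : ℕ`,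
`[x, -2, …, -2, -4, -2, …, -2] = [x + 1, b + 1, -2, c + 1]`, both sides being
`D / (x D + N)` with `D = (2b + 3)c + 3b + 4` and `N = (2b + 1)c + 3b + 1`.
For even `a = 2m` and `b + c` odd, exactly one of `b + 1`, `c + 1` is even, and writing
it as `2n` or `2l` (the other one as `2n - 1` or `2l - 1`) gives the two shapes.
-/

/-- The (subtractive) continued fraction value of a finite list of rationals:
`cf [] = 0` and `cf (a :: t) = (a - cf t)⁻¹`. -/
def cf : List ℚ → ℚ
  | [] => 0
  | a :: t => (a - cf t)⁻¹

lemma cf_cons (x : ℚ) (t : List ℚ) : cf (x :: t) = (x - cf t)⁻¹ := rfl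

lemma cf_cons_of_eq_neg_div {t : List ℚ} {p q : ℚ} (x : ℚ) (ht : cf t = -p / q) (hq : q ≠ 0) :
    cf (x :: t) = q / (x * q + p) := by
  rw [cf_cons, ht, neg_div, sub_neg_eq_add, add_div' _ _ _ hq, inv_div]

lemma cf_neg_cons_of_eq_neg_div {t : List ℚ} {p q : ℚ} (k : ℚ) (ht : cf t = -p / q)
    (hq : q ≠ 0) : cf (-k :: t) = -q / (k * q - p) := by
  rw [cf_cons_of_eq_neg_div _ ht hq, show -k * q + p = -(k * q - p) by ring, div_neg, neg_div]

lemma cf_replicate_neg_two (c : ℕ) : cf (List.replicate c (-2)) = -c / (c + 1) := by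
  induction c with
  | zero => simp [cf]
  | succ c ih =>
    rw [List.replicate_succ, cf_neg_cons_of_eq_neg_div 2 ih (by positivity)]
    push_cast
    ring

lemma cf_replicate_neg_two_append_neg_four (b c : ℕ) :
    cf (List.replicate b (-2) ++ -4 :: List.replicate c (-2)) =
      -((2 * b + 1) * c + 3 * b + 1) / ((2 * b + 3) * c + 3 * b + 4) := by
  induction b with
  | zero =>
    rw [List.replicate_zero, List.nil_append,
      cf_neg_cons_of_eq_neg_div 4 (cf_replicate_neg_two c) (by positivity)]
    push_cast
    ring
  | succ b ih =>
    rw [List.replicate_succ, List.cons_append, cf_neg_cons_of_eq_neg_div 2 ih (by positivity)]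
    push_cast
    ring

lemma cf_replicate_neg_two_append_neg_four_add_one (b c : ℕ) :
    cf (List.replicate b (-2) ++ -4 :: List.replicate c (-2)) + 1 =
      cf [(b : ℚ) + 1, -2, (c : ℚ) + 1] := by
  have h_last : cf [(c : ℚ) + 1] = -(-1) / (c + 1) := by simp [cf]
  have h_tail := cf_neg_cons_of_eq_neg_div 2 h_last (by positivity)
  rw [cf_replicate_neg_two_append_neg_four, div_add_one (by positivity),
    cf_cons_of_eq_neg_div _ h_tail (by rw [sub_neg_eq_add]; positivity)]
  ring

lemma cf_cons_replicate_neg_two_append_neg_four (x : ℚ) (b c : ℕ) :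
    cf (x :: (List.replicate b (-2) ++ -4 :: List.replicate c (-2))) =
      cf [x + 1, (b : ℚ) + 1, -2, (c : ℚ) + 1] := by
  rw [cf_cons, cf_cons (x + 1), ← cf_replicate_neg_two_append_neg_four_add_one]
  ring

theorem stmt_7 (a : ℤ) (ha : 2 ≤ a) (hae : Even a) (b c : ℕ)
    (hb : 1 ≤ b) (hc : 1 ≤ c) (hbc : Odd (b + c)) :
    (∃ m n l : ℤ, 1 ≤ m ∧ 1 ≤ n ∧ 2 ≤ l ∧
      cf ((a : ℚ) :: (List.replicate b (-2 : ℚ) ++ (-4 : ℚ) :: List.replicate c (-2 : ℚ))) =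
        cf [2 * (m : ℚ) + 1, 2 * (n : ℚ), -2, 2 * (l : ℚ) - 1]) ∨
    (∃ m n l : ℤ, 1 ≤ m ∧ 2 ≤ n ∧ 1 ≤ l ∧
      cf ((a : ℚ) :: (List.replicate b (-2 : ℚ) ++ (-4 : ℚ) :: List.replicate c (-2 : ℚ))) =
        cf [2 * (m : ℚ) + 1, 2 * (n : ℚ) - 1, -2, 2 * (l : ℚ)]) := by
  obtain ⟨m, rfl⟩ := hae
  rw [cf_cons_replicate_neg_two_append_neg_four]
  rcases Nat.even_or_odd b with hb_even | hb_odd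
  · obtain ⟨k, rfl⟩ := hb_even
    obtain ⟨j, rfl⟩ : Odd c := (Nat.odd_add'.mp hbc).mpr ⟨k, rfl⟩
    refine Or.inr ⟨m, k + 1, j + 1, by omega, by omega, by omega, ?_⟩
    push_cast
    ring_nf
  · obtain ⟨k, rfl⟩ := hb_odd
    obtain ⟨j, rfl⟩ : Even c := (Nat.odd_add.mp hbc).mp ⟨k, rfl⟩
    refine Or.inl ⟨m, k + 1, j + 1, by omega, by omega, by omega, ?_⟩
    push_cast
    ring_nf
end

section
/- For every nonzero integer a and every integer j ≥ 0, the continued fraction value [a, 2, …, 2] (with j copies of 2 after the entry a) equals [a − 1, −(j+1)]. -/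
lemma cf_replicate_two (j : ℕ) : cf (List.replicate j 2) = j / (j + 1) := by
  induction j with
  | zero => simp [cf]
  | succ n ih =>
    have two_sub : (2 : ℚ) - n / (n + 1) = (n + 2) / (n + 1) := by
      field_simp
      ring
    rw [List.replicate_succ, cf, ih, two_sub, inv_div]
    push_cast
    ring

theorem stmt_8_general (a : ℤ) (j : ℕ) :
    cf ((a : ℚ) :: List.replicate j (2 : ℚ)) =
      cf [(a : ℚ) - 1, -((j : ℚ) + 1)] := by
  simp only [cf, cf_replicate_two, sub_zero, inv_neg]
  congr 1
  field_simp
  ring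

theorem stmt_8 (a : ℤ) (ha : a ≠ 0) (j : ℕ) :
    cf ((a : ℚ) :: List.replicate j (2 : ℚ)) =
      cf [(a : ℚ) - 1, -((j : ℚ) + 1)] :=
  stmt_8_general a j
end
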